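/- For any collection of nonnegative reals d_1, d_2, ..., d_{n+1} summing to 1 with n = 2m+1, there exists an index j in {1,...,m+1} such that either (d_j ≥ 2^{j-1}·α and d_l < 2^{l-1}·α for all l < j) or (d_{n+2-j} ≥ 2^{j-1}·α and d_{n+2-l} < 2^{l-1}·α for all l < j), where α = 1/(2·2^{m+1} - 2). -/

import Mathlib

/-!
Pair each index `j ≤ m + 1` with its mirror `2m + 3 - j`. The thresholds `2 · 2^(j-1) α` of the
pairs sum to exactly `1 = ∑ d`, so some pair `d j + d (2m + 3 - j)` reaches its threshold, i.e.
`d j` or `d (2m + 3 - j)` is at least `2^(j-1) α`; the least such `j` is the required index.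
-/

open Finset

theorem sum_Icc_two_mul_eq_sum_add_reflect {M : Type*} [AddCommMonoid M] (f : ℕ → M) (k : ℕ) :
    ∑ i ∈ Icc 1 (2 * k), f i = ∑ j ∈ Icc 1 k, (f j + f (2 * k + 1 - j)) := by
  have hupper : ∑ j ∈ Ico 1 (k + 1), f (2 * k + 1 - j) = ∑ i ∈ Ico (k + 1) (2 * k + 1), f i := by
    rw [sum_Ico_reflect f 1 (by omega)]
    congr 2
    omega
  rw [sum_add_distrib, ← Ico_add_one_right_eq_Icc, ← Ico_add_one_right_eq_Icc, hupper,
    sum_Ico_consecutive f (by omega) (by omega)]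

theorem sum_Icc_two_pow_pred (k : ℕ) : ∑ j ∈ Icc 1 k, (2 : ℝ) ^ (j - 1) = 2 ^ k - 1 := by
  induction k with
  | zero => simp
  | succ k ih =>
    rw [sum_Icc_succ_top (by omega), ih, Nat.add_sub_cancel, pow_succ]
    ring

theorem exists_minimal_of_exists_or {P Q : ℕ → Prop} {N : ℕ}
    (h : ∃ j, 1 ≤ j ∧ j ≤ N ∧ (P j ∨ Q j)) :
    ∃ j, 1 ≤ j ∧ j ≤ N ∧ ((P j ∧ ∀ l, 1 ≤ l → l < j → ¬P l) ∨
      (Q j ∧ ∀ l, 1 ≤ l → l < j → ¬Q l)) := by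
  classical
  obtain ⟨hj1, hjN, hPQ⟩ := Nat.find_spec h
  have hmin : ∀ l, 1 ≤ l → l < Nat.find h → ¬P l ∧ ¬Q l := fun l hl1 hlj =>
    not_or.mp fun hl => Nat.find_min h hlj ⟨hl1, hlj.le.trans hjN, hl⟩
  refine ⟨Nat.find h, hj1, hjN, hPQ.imp (fun hP => ⟨hP, ?_⟩) (fun hQ => ⟨hQ, ?_⟩)⟩
  · exact fun l hl1 hlj => (hmin l hl1 hlj).1
  · exact fun l hl1 hlj => (hmin l hl1 hlj).2

theorem exists_good_index (m : ℕ) (d : ℕ → ℝ)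
    (hsum : ∑ i ∈ Finset.Icc 1 (2 * m + 2), d i = 1) :
    ∃ j, 1 ≤ j ∧ j ≤ m + 1 ∧
      ((d j ≥ 2 ^ (j - 1) * (1 / (2 * 2 ^ (m + 1) - 2)) ∧
        ∀ l, 1 ≤ l → l < j → d l < 2 ^ (l - 1) * (1 / (2 * 2 ^ (m + 1) - 2))) ∨
       (d (2 * m + 3 - j) ≥ 2 ^ (j - 1) * (1 / (2 * 2 ^ (m + 1) - 2)) ∧
        ∀ l, 1 ≤ l → l < j → d (2 * m + 3 - l) < 2 ^ (l - 1) * (1 / (2 * 2 ^ (m + 1) - 2)))) := by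
  set α : ℝ := 1 / (2 * 2 ^ (m + 1) - 2) with hα
  have hthresholds : ∑ j ∈ Icc 1 (m + 1), 2 * (2 ^ (j - 1) * α) = 1 := by
    have hpos : (2 : ℝ) ^ (m + 1) - 1 ≠ 0 := (sub_pos.mpr (one_lt_pow₀ one_lt_two (by omega))).ne'
    rw [← mul_sum, ← sum_mul, sum_Icc_two_pow_pred, hα,
      show (2 : ℝ) * 2 ^ (m + 1) - 2 = 2 * (2 ^ (m + 1) - 1) by ring]
    field_simp
  have hpairs : ∑ j ∈ Icc 1 (m + 1), 2 * (2 ^ (j - 1) * α) ≤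
      ∑ j ∈ Icc 1 (m + 1), (d j + d (2 * m + 3 - j)) := by
    rw [hthresholds, ← hsum]
    exact (sum_Icc_two_mul_eq_sum_add_reflect d (m + 1)).le
  obtain ⟨j, hj, hle⟩ := exists_le_of_sum_le ⟨1, by simp⟩ hpairs
  obtain ⟨hj1, hjm⟩ := mem_Icc.mp hj
  simpa only [not_le] using exists_minimal_of_exists_or (P := fun j => d j ≥ 2 ^ (j - 1) * α)
    (Q := fun j => d (2 * m + 3 - j) ≥ 2 ^ (j - 1) * α)
    ⟨j, hj1, hjm, by by_contra! h; linarith [h.1, h.2]⟩
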